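/- Let v₀ = (a₀,b₀,c₀), v₁ = (a₁,b₁,c₁), v₃ = (a₃,b₃,c₃) be ℝ-linearly independent primitive vectors in ℤ≥0³. Set Ψ = a₁b₃ − a₃b₁, μ_A = a₀b₃ − a₃b₀, μ_B = a₁b₀ − a₀b₁, and assume Ψ, μ_A, μ_B > 0, that μ_A = #(ℤ³ ∩ ◊(v₀,v₃)) and μ_B = #(ℤ³ ∩ ◊(v₀,v₁)), and that the determinant of the matrix with rows v₀, v₁, v₃ equals #(ℤ³ ∩ ◊(v₀,v₁,v₃)) = μ_A·μ_B·f_AB for a positive integer f_AB. Let μ₂ = #(ℤ³ ∩ ◊(v₁,v₃)). Then μ₂ = gcd(μ_A f_AB, μ_B f_AB, Ψ) = gcd(μ_A f_AB, Ψ) = gcd(μ_B f_AB, Ψ). -/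

import Mathlib

/-!
For a primitive `u` and `u × w ≠ 0`, the lattice points of `◊(u, w)` are the vectors `(j u + k w) / g`, where
`g` is the content of `u × w`, `k` runs over `[0, g)` and `j ∈ [0, g)` is then determined by a
congruence mod `g`; hence `#◊(u, w) = content (u × w)`. So the hypotheses on `μ_A` and `μ_B` say
that `μ_A` divides `v₀ × v₃` and `μ_B` divides `v₀ × v₁`.
Writing `v₀ × v₃ = μ_A p`, the triple product expansion gives `p × (v₁ × v₃) = μ_B f_AB v₃` and
`v₁ × v₃ = Ψ p + μ_B f_AB (v₃ × e₃)`; as `v₃` is primitive, the content of `v₁ × v₃` is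
`gcd (μ_B f_AB, Ψ)`. Exchanging the roles of `v₁` and `v₃` gives `gcd (μ_A f_AB, Ψ)`.
-/

noncomputable section

/-- The coercion of an integer vector in `ℤ³` to `ℝ³`. -/
def coe3 (v : Fin 3 → ℤ) : Fin 3 → ℝ := fun i => (v i : ℝ)

/-- A vector of `ℤ³` is primitive if the greatest common divisor of its components is 1. -/
def IsPrimitive (v : Fin 3 → ℤ) : Prop := Int.gcd (v 0) (Int.gcd (v 1) (v 2)) = 1

/-- The fundamental parallelepiped spanned by two vectors:
`◊(a,b) = {s•a + t•b : s,t ∈ [0,1)}`. -/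
def para2 (a b : Fin 3 → ℝ) : Set (Fin 3 → ℝ) :=
  {x | ∃ s t : ℝ, 0 ≤ s ∧ s < 1 ∧ 0 ≤ t ∧ t < 1 ∧ x = s • a + t • b}

/-- The fundamental parallelepiped spanned by three vectors:
`◊(a,b,c) = {s•a + t•b + u•c : s,t,u ∈ [0,1)}`. -/
def para3 (a b c : Fin 3 → ℝ) : Set (Fin 3 → ℝ) :=
  {x | ∃ s t u : ℝ, 0 ≤ s ∧ s < 1 ∧ 0 ≤ t ∧ t < 1 ∧ 0 ≤ u ∧ u < 1 ∧
    x = s • a + t • b + u • c}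

/-- The integral points `ℤ³ ∩ ◊(a,b)` of a two-dimensional fundamental parallelepiped. -/
def H2pts (a b : Fin 3 → ℤ) : Set (Fin 3 → ℤ) := {x | coe3 x ∈ para2 (coe3 a) (coe3 b)}

/-- The integral points `ℤ³ ∩ ◊(a,b,c)` of a three-dimensional fundamental parallelepiped. -/
def H3pts (a b c : Fin 3 → ℤ) : Set (Fin 3 → ℤ) :=
  {x | coe3 x ∈ para3 (coe3 a) (coe3 b) (coe3 c)}

open Matrix

def content3 (v : Fin 3 → ℤ) : ℕ := Int.gcd (v 0) (Int.gcd (v 1) (v 2))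

section Content

variable {v : Fin 3 → ℤ}

lemma content3_dvd (v : Fin 3 → ℤ) (i : Fin 3) : (content3 v : ℤ) ∣ v i := by
  have h12 : (content3 v : ℤ) ∣ Int.gcd (v 1) (v 2) := Int.gcd_dvd_right _ _
  fin_cases i
  · exact Int.gcd_dvd_left _ _
  · exact h12.trans (Int.gcd_dvd_left _ _)
  · exact h12.trans (Int.gcd_dvd_right _ _)

lemma dvd_content3 {d : ℤ} (h : ∀ i, d ∣ v i) : d ∣ content3 v :=
  Int.dvd_coe_gcd (h 0) (Int.dvd_coe_gcd (h 1) (h 2))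

lemma content3_neg (v : Fin 3 → ℤ) : content3 (-v) = content3 v := by
  simp [content3, Int.gcd_neg, Int.neg_gcd]

lemma content3_pos (hv : v ≠ 0) : 0 < content3 v := by
  refine Nat.pos_of_ne_zero fun h => hv (funext fun i => ?_)
  simpa [h] using content3_dvd v i

lemma exists_dotProduct_eq_content3 (v : Fin 3 → ℤ) : ∃ c, c ⬝ᵥ v = content3 v := by
  set h := Int.gcd (v 1) (v 2)
  have h0 := Int.gcd_eq_gcd_ab (v 0) h
  have h12 := Int.gcd_eq_gcd_ab (v 1) (v 2)
  refine ⟨![Int.gcdA (v 0) h, Int.gcdB (v 0) h * Int.gcdA (v 1) (v 2),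
    Int.gcdB (v 0) h * Int.gcdB (v 1) (v 2)], ?_⟩
  rw [content3, h0, vec3_dotProduct]
  simp only [Matrix.cons_val]
  linear_combination -Int.gcdB (v 0) h * h12

lemma IsPrimitive.dvd_of_forall_dvd_mul {d m : ℤ} (hv : IsPrimitive v) (h : ∀ i, d ∣ m * v i) :
    d ∣ m := by
  obtain ⟨c, hc⟩ := exists_dotProduct_eq_content3 v
  have hm : m = c 0 * (m * v 0) + c 1 * (m * v 1) + c 2 * (m * v 2) := by
    rw [vec3_dotProduct, show content3 v = 1 from hv] at hc
    linear_combination -m * hc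
  rw [hm]
  exact dvd_add (dvd_add (dvd_mul_of_dvd_right (h 0) _) (dvd_mul_of_dvd_right (h 1) _))
    (dvd_mul_of_dvd_right (h 2) _)

lemma content3_dvd_cross_left (v w : Fin 3 → ℤ) (i : Fin 3) : (content3 v : ℤ) ∣ (v ⨯₃ w) i := by
  have h := content3_dvd v
  fin_cases i <;> simp only [cross_apply, Fin.isValue] <;>
    exact dvd_sub (dvd_mul_of_dvd_left (h _) _) (dvd_mul_of_dvd_left (h _) _)

lemma content3_dvd_cross_right (v w : Fin 3 → ℤ) (i : Fin 3) : (content3 w : ℤ) ∣ (v ⨯₃ w) i := by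
  rw [← cross_anticomm, Pi.neg_apply, dvd_neg]
  exact content3_dvd_cross_left w v i

end Content

section Lattice

variable {u w x : Fin 3 → ℤ}

@[simp] lemma coe3_add (v w : Fin 3 → ℤ) : coe3 (v + w) = coe3 v + coe3 w := by
  ext i; simp [coe3]

@[simp] lemma coe3_smul (a : ℤ) (v : Fin 3 → ℤ) : coe3 (a • v) = (a : ℝ) • coe3 v := by
  ext i; simp [coe3]

lemma coe3_injective : Function.Injective coe3 :=
  fun _ _ h => funext fun i => by simpa [coe3] using congrFun h i

lemma coe3_cross (v w : Fin 3 → ℤ) : coe3 (v ⨯₃ w) = coe3 v ⨯₃ coe3 w := by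
  ext i; fin_cases i <;> simp [coe3, cross_apply]

lemma exists_intCast_eq_mul_content3 {n v : Fin 3 → ℤ} {t : ℝ} (h : coe3 v = t • coe3 n) :
    ∃ k : ℤ, (k : ℝ) = t * content3 n := by
  obtain ⟨c, hc⟩ := exists_dotProduct_eq_content3 n
  have hv : ∀ i, (v i : ℝ) = t * n i := fun i => congrFun h i
  refine ⟨c ⬝ᵥ v, ?_⟩
  rw [← Int.cast_natCast, ← hc]
  simp only [vec3_dotProduct, Int.cast_add, Int.cast_mul, hv]
  ring

lemma exists_smul_eq_of_mem_H2pts (hn : u ⨯₃ w ≠ 0) (hx : x ∈ H2pts u w) :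
    ∃ j k : ℤ, 0 ≤ j ∧ j < content3 (u ⨯₃ w) ∧ 0 ≤ k ∧ k < content3 (u ⨯₃ w) ∧
      (content3 (u ⨯₃ w) : ℤ) • x = j • u + k • w := by
  obtain ⟨s, t, hs0, hs1, ht0, ht1, hx⟩ := hx
  have hg : (0 : ℝ) < content3 (u ⨯₃ w) := by exact_mod_cast content3_pos hn
  have hs : coe3 (x ⨯₃ w) = s • coe3 (u ⨯₃ w) := by
    simp [coe3_cross, hx, cross_self]
  have ht : coe3 (u ⨯₃ x) = t • coe3 (u ⨯₃ w) := by
    simp [coe3_cross, hx, cross_self]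
  obtain ⟨j, hj⟩ := exists_intCast_eq_mul_content3 hs
  obtain ⟨k, hk⟩ := exists_intCast_eq_mul_content3 ht
  refine ⟨j, k, ?_, ?_, ?_, ?_, coe3_injective ?_⟩
  · have : (0 : ℝ) ≤ j := hj ▸ mul_nonneg hs0 hg.le
    exact_mod_cast this
  · have : (j : ℝ) < content3 (u ⨯₃ w) := hj ▸ mul_lt_of_lt_one_left hg hs1
    exact_mod_cast this
  · have : (0 : ℝ) ≤ k := hk ▸ mul_nonneg ht0 hg.le
    exact_mod_cast this
  · have : (k : ℝ) < content3 (u ⨯₃ w) := hk ▸ mul_lt_of_lt_one_left hg ht1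
    exact_mod_cast this
  · simp only [coe3_smul, coe3_add, hx, hj, hk, Int.cast_natCast]
    module

lemma mem_H2pts_of_smul_eq {N j k : ℤ} (hN : 0 < N) (hj0 : 0 ≤ j) (hjN : j < N) (hk0 : 0 ≤ k)
    (hkN : k < N) (h : N • x = j • u + k • w) : x ∈ H2pts u w := by
  have hNR : (0 : ℝ) < N := by exact_mod_cast hN
  have hx := congrArg coe3 h
  rw [coe3_smul, coe3_add, coe3_smul, coe3_smul] at hx
  refine ⟨j / N, k / N, by positivity, ?_, by positivity, ?_, ?_⟩
  · exact (div_lt_one hNR).2 (by exact_mod_cast hjN)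
  · exact (div_lt_one hNR).2 (by exact_mod_cast hkN)
  · rw [div_eq_inv_mul, div_eq_inv_mul, mul_smul, mul_smul, ← smul_add, ← hx, smul_smul,
      inv_mul_cancel₀ hNR.ne', one_smul]

lemma exists_dvd_sub_mul_of_isPrimitive (hu : IsPrimitive u) :
    ∃ l : ℤ, ∀ i, (content3 (u ⨯₃ w) : ℤ) ∣ w i - l * u i := by
  obtain ⟨c, hc⟩ := exists_dotProduct_eq_content3 u
  refine ⟨w ⬝ᵥ c, fun i => ?_⟩
  have hcross : u ⨯₃ w ⨯₃ c = w - (w ⬝ᵥ c) • u := by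
    rw [cross_cross_eq_smul_sub_smul, dotProduct_comm u c, hc, show content3 u = 1 from hu,
      Nat.cast_one, one_smul]
  simpa [hcross] using content3_dvd_cross_left (u ⨯₃ w) c i

lemma IsPrimitive.dvd_add_mul {g l j k : ℤ} (hu : IsPrimitive u)
    (hl : ∀ i, g ∣ w i - l * u i) (h : ∀ i, g ∣ j * u i + k * w i) : g ∣ j + k * l :=
  hu.dvd_of_forall_dvd_mul fun i => by
    rw [show (j + k * l) * u i = (j * u i + k * w i) - k * (w i - l * u i) by ring]
    exact dvd_sub (h i) (dvd_mul_of_dvd_right (hl i) k)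

lemma coeff_right_eq_of_smul_add_smul_eq (hn : u ⨯₃ w ≠ 0) {a b a' b' : ℤ}
    (h : a • u + b • w = a' • u + b' • w) : b = b' := by
  have h' := congrArg (u ⨯₃ ·) h
  simp only [map_add, map_smul, cross_self, smul_zero, zero_add] at h'
  exact smul_left_injective ℤ hn h'

theorem ncard_H2pts (hu : IsPrimitive u) (hn : u ⨯₃ w ≠ 0) :
    (H2pts u w).ncard = content3 (u ⨯₃ w) := by
  set g := content3 (u ⨯₃ w)
  have hg : (0 : ℤ) < g := by exact_mod_cast content3_pos hn
  obtain ⟨l, hl⟩ := exists_dvd_sub_mul_of_isPrimitive (w := w) hu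
  -- `j k` is the residue in `[0, g)` that makes `j k • u + k • w` divisible by `g`
  let j : ℕ → ℤ := fun k => (-(k * l)) % g
  have hj : ∀ {j' : ℤ} {k : ℕ}, 0 ≤ j' → j' < g → ((g : ℤ) ∣ j' + k * l ↔ j' = j k) := by
    intro j' k hj0 hjg
    rw [← Int.emod_eq_of_lt hj0 hjg, ← Int.ModEq, Int.modEq_iff_dvd, Int.emod_eq_of_lt hj0 hjg,
      show -(k * l) - j' = -(j' + k * l) by ring, dvd_neg]
  have hdvd : ∀ (k : ℕ) i, (g : ℤ) ∣ j k * u i + k * w i := fun k i => by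
    rw [show j k * u i + k * w i = (j k + k * l) * u i + k * (w i - l * u i) by ring]
    exact dvd_add (dvd_mul_of_dvd_left ((hj (Int.emod_nonneg _ hg.ne')
      (Int.emod_lt_of_pos _ hg)).2 rfl) _) (dvd_mul_of_dvd_right (hl i) _)
  let F : ℕ → Fin 3 → ℤ := fun k i => (j k * u i + k * w i) / g
  have hF : ∀ k, (g : ℤ) • F k = j k • u + (k : ℤ) • w := fun k => funext fun i => by
    simp [F, Int.mul_ediv_cancel' (hdvd k i)]
  have hbij : Set.BijOn F (Set.Ico 0 g) (H2pts u w) := by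
    refine ⟨fun k hk => ?_, fun k _ k' _ hkk' => ?_, fun x hx => ?_⟩
    · exact mem_H2pts_of_smul_eq hg (Int.emod_nonneg _ hg.ne') (Int.emod_lt_of_pos _ hg)
        (Int.natCast_nonneg k) (by exact_mod_cast hk.2) (hF k)
    · exact_mod_cast coeff_right_eq_of_smul_add_smul_eq hn ((hF k).symm.trans (hkk' ▸ hF k'))
    · obtain ⟨j', k, hj0, hjg, hk0, hkg, hx⟩ := exists_smul_eq_of_mem_H2pts hn hx
      lift k to ℕ using hk0
      have hj' : j' = j k := (hj hj0 hjg).1 <| hu.dvd_add_mul hl fun i =>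
        ⟨x i, by simpa using (congrFun hx i).symm⟩
      refine ⟨k, ⟨Nat.zero_le _, by exact_mod_cast hkg⟩, smul_right_injective _ hg.ne' ?_⟩
      exact (hF k).trans (hj' ▸ hx.symm)
  rw [← hbij.ncard_eq, Set.ncard_Ico_nat, Nat.sub_zero]

end Lattice

lemma smul_cross_sub_smul_cross {R : Type*} [CommRing R] (x y z e : Fin 3 → R) :
    (e ⬝ᵥ x ⨯₃ z) • (y ⨯₃ z) - (e ⬝ᵥ y ⨯₃ z) • (x ⨯₃ z) = (x ⬝ᵥ y ⨯₃ z) • (z ⨯₃ e) := by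
  simp_rw [cross_apply, vec3_dotProduct]
  ext i
  fin_cases i <;>
  · simp only [Fin.isValue, Nat.succ_eq_add_one, Nat.reduceAdd, Fin.reduceFinMk, cons_val,
      Pi.sub_apply, Pi.smul_apply, smul_eq_mul]
    ring

theorem content3_cross_eq_gcd {x y z : Fin 3 → ℤ} {m : ℤ} (hz : IsPrimitive z)
    (hμ : (x ⨯₃ z) 2 ≠ 0) (hdvd : ∀ i, (x ⨯₃ z) 2 ∣ (x ⨯₃ z) i)
    (hdet : x ⬝ᵥ y ⨯₃ z = (x ⨯₃ z) 2 * m) :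
    content3 (y ⨯₃ z) = Int.gcd m ((y ⨯₃ z) 2) := by
  choose p hp using hdvd
  have hxz : x ⨯₃ z = (x ⨯₃ z) 2 • p := funext hp
  have hpz : p ⬝ᵥ z = 0 := by
    refine mul_left_cancel₀ hμ ?_
    rw [mul_zero, ← smul_eq_mul, ← smul_dotProduct, ← hxz, dotProduct_comm, dot_cross_self]
  have hpy : y ⬝ᵥ p = -m := by
    refine mul_left_cancel₀ hμ ?_
    rw [← smul_eq_mul, ← dotProduct_smul, ← hxz, mul_neg, ← hdet, triple_product_permutation,
      ← dotProduct_neg, cross_anticomm]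
  have hpn : p ⨯₃ (y ⨯₃ z) = m • z := by
    rw [cross_cross_eq_smul_sub_smul', hpz, hpy, zero_smul, zero_sub, neg_smul, neg_neg]
  have hn : y ⨯₃ z = (y ⨯₃ z) 2 • p + m • (z ⨯₃ Pi.single 2 1) := by
    refine smul_right_injective _ hμ ?_
    have h := smul_cross_sub_smul_cross x y z (Pi.single 2 1)
    simp only [single_dotProduct, one_mul, hdet] at h
    simp only [smul_add, smul_comm ((x ⨯₃ z) 2) ((y ⨯₃ z) 2) p, ← hxz, smul_smul]
    rw [← h]
    abel
  refine Nat.dvd_antisymm (Int.dvd_gcd ?_ (content3_dvd _ 2))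
    (Int.natCast_dvd_natCast.1 (dvd_content3 fun i => ?_))
  · exact hz.dvd_of_forall_dvd_mul fun i => by
      simpa [hpn] using content3_dvd_cross_right p (y ⨯₃ z) i
  · rw [congrFun hn i, Pi.add_apply, Pi.smul_apply, Pi.smul_apply, smul_eq_mul, smul_eq_mul]
    exact dvd_add (dvd_mul_of_dvd_left (Int.gcd_dvd_right _ _) _)
      (dvd_mul_of_dvd_left (Int.gcd_dvd_left _ _) _)

theorem mu2_eq_gcds_general (a₀ b₀ c₀ a₁ b₁ c₁ a₃ b₃ c₃ : ℤ)
    (hp₀ : IsPrimitive ![a₀, b₀, c₀]) (hp₁ : IsPrimitive ![a₁, b₁, c₁])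
    (hp₃ : IsPrimitive ![a₃, b₃, c₃])
    (hΨpos : 0 < a₁ * b₃ - a₃ * b₁) (hμApos : 0 < a₀ * b₃ - a₃ * b₀)
    (hμBpos : 0 < a₁ * b₀ - a₀ * b₁)
    (hμA : ((H2pts ![a₀, b₀, c₀] ![a₃, b₃, c₃]).ncard : ℤ) = a₀ * b₃ - a₃ * b₀)
    (hμB : ((H2pts ![a₀, b₀, c₀] ![a₁, b₁, c₁]).ncard : ℤ) = a₁ * b₀ - a₀ * b₁)
    (fAB : ℕ)
    (hdet : Matrix.det !![a₀, b₀, c₀; a₁, b₁, c₁; a₃, b₃, c₃] =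
      ((H3pts ![a₀, b₀, c₀] ![a₁, b₁, c₁] ![a₃, b₃, c₃]).ncard : ℤ))
    (hcard : ((H3pts ![a₀, b₀, c₀] ![a₁, b₁, c₁] ![a₃, b₃, c₃]).ncard : ℤ) =
      (a₀ * b₃ - a₃ * b₀) * (a₁ * b₀ - a₀ * b₁) * (fAB : ℤ)) :
    (H2pts ![a₁, b₁, c₁] ![a₃, b₃, c₃]).ncard =
        Int.gcd ((a₀ * b₃ - a₃ * b₀) * fAB)
          (Int.gcd ((a₁ * b₀ - a₀ * b₁) * fAB) (a₁ * b₃ - a₃ * b₁)) ∧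
      (H2pts ![a₁, b₁, c₁] ![a₃, b₃, c₃]).ncard =
        Int.gcd ((a₀ * b₃ - a₃ * b₀) * fAB) (a₁ * b₃ - a₃ * b₁) ∧
      (H2pts ![a₁, b₁, c₁] ![a₃, b₃, c₃]).ncard =
        Int.gcd ((a₁ * b₀ - a₀ * b₁) * fAB) (a₁ * b₃ - a₃ * b₁) := by
  have h₀₁ : (![a₀, b₀, c₀] ⨯₃ ![a₁, b₁, c₁]) 2 = -(a₁ * b₀ - a₀ * b₁) := by
    simp [cross_apply, mul_comm]
  have h₀₃ : (![a₀, b₀, c₀] ⨯₃ ![a₃, b₃, c₃]) 2 = a₀ * b₃ - a₃ * b₀ := by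
    simp [cross_apply, mul_comm]
  have h₁₃ : (![a₁, b₁, c₁] ⨯₃ ![a₃, b₃, c₃]) 2 = a₁ * b₃ - a₃ * b₁ := by
    simp [cross_apply, mul_comm]
  have hD : ![a₀, b₀, c₀] ⬝ᵥ ![a₁, b₁, c₁] ⨯₃ ![a₃, b₃, c₃] =
      (a₀ * b₃ - a₃ * b₀) * ((a₁ * b₀ - a₀ * b₁) * fAB) := by
    rw [triple_product_eq_det, ← mul_assoc, ← hcard, ← hdet]
    rfl
  have hμ₂ := ncard_H2pts hp₁ (ne_of_apply_ne (· 2) (h₁₃ ▸ hΨpos.ne'))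
  have hA := ncard_H2pts hp₀ (ne_of_apply_ne (· 2) (h₀₃ ▸ hμApos.ne'))
  have hB := ncard_H2pts hp₀ (ne_of_apply_ne (· 2) (h₀₁ ▸ neg_ne_zero.2 hμBpos.ne'))
  have hgcdB : content3 (![a₁, b₁, c₁] ⨯₃ ![a₃, b₃, c₃]) =
      Int.gcd ((a₁ * b₀ - a₀ * b₁) * fAB) (a₁ * b₃ - a₃ * b₁) := by
    rw [← h₁₃]
    refine content3_cross_eq_gcd hp₃ (h₀₃ ▸ hμApos.ne') (fun i => ?_) (h₀₃ ▸ hD)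
    rw [h₀₃, ← hμA, hA]
    exact content3_dvd _ i
  have hgcdA : content3 (![a₁, b₁, c₁] ⨯₃ ![a₃, b₃, c₃]) =
      Int.gcd ((a₀ * b₃ - a₃ * b₀) * fAB) (a₁ * b₃ - a₃ * b₁) := by
    rw [← content3_neg, cross_anticomm, ← Int.gcd_neg, ← h₁₃, ← Pi.neg_apply, cross_anticomm]
    refine content3_cross_eq_gcd hp₁ (h₀₁ ▸ neg_ne_zero.2 hμBpos.ne') (fun i => ?_) ?_
    · rw [h₀₁, neg_dvd, ← hμB, hB]
      exact content3_dvd _ i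
    · rw [h₀₁, triple_product_permutation, ← cross_anticomm, dotProduct_neg,
        triple_product_permutation, hD]
      ring
  refine ⟨?_, hμ₂.trans hgcdA, hμ₂.trans hgcdB⟩
  rw [hμ₂, ← hgcdB]
  exact_mod_cast (Int.gcd_eq_right (Int.natCast_nonneg _) (hgcdA ▸ Int.gcd_dvd_left _ _)).symm

/-- Let `v₀, v₁, v₃` be ℝ-linearly independent primitive vectors in `ℤ≥0³`
with `Ψ = a₁b₃ − a₃b₁ > 0`, `μ_A = a₀b₃ − a₃b₀ > 0`, `μ_B = a₁b₀ − a₀b₁ > 0`; assume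
`μ_A = #(ℤ³ ∩ ◊(v₀,v₃))`, `μ_B = #(ℤ³ ∩ ◊(v₀,v₁))` and that the determinant of the matrix
with rows `v₀, v₁, v₃` equals `#(ℤ³ ∩ ◊(v₀,v₁,v₃)) = μ_A·μ_B·f_AB` for a positive integer
`f_AB`.  Then `μ₂ = #(ℤ³ ∩ ◊(v₁,v₃))` satisfies
`μ₂ = gcd(μ_A f_AB, μ_B f_AB, Ψ) = gcd(μ_A f_AB, Ψ) = gcd(μ_B f_AB, Ψ)`. -/
theorem mu2_eq_gcds (a₀ b₀ c₀ a₁ b₁ c₁ a₃ b₃ c₃ : ℤ)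
    (hnn₀ : 0 ≤ a₀ ∧ 0 ≤ b₀ ∧ 0 ≤ c₀) (hnn₁ : 0 ≤ a₁ ∧ 0 ≤ b₁ ∧ 0 ≤ c₁)
    (hnn₃ : 0 ≤ a₃ ∧ 0 ≤ b₃ ∧ 0 ≤ c₃)
    (hp₀ : IsPrimitive ![a₀, b₀, c₀]) (hp₁ : IsPrimitive ![a₁, b₁, c₁])
    (hp₃ : IsPrimitive ![a₃, b₃, c₃])
    (hli : LinearIndependent ℝ
      ![coe3 ![a₀, b₀, c₀], coe3 ![a₁, b₁, c₁], coe3 ![a₃, b₃, c₃]])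
    (hΨpos : 0 < a₁ * b₃ - a₃ * b₁) (hμApos : 0 < a₀ * b₃ - a₃ * b₀)
    (hμBpos : 0 < a₁ * b₀ - a₀ * b₁)
    (hμA : ((H2pts ![a₀, b₀, c₀] ![a₃, b₃, c₃]).ncard : ℤ) = a₀ * b₃ - a₃ * b₀)
    (hμB : ((H2pts ![a₀, b₀, c₀] ![a₁, b₁, c₁]).ncard : ℤ) = a₁ * b₀ - a₀ * b₁)
    (fAB : ℕ) (hfABpos : 0 < fAB)
    (hdet : Matrix.det !![a₀, b₀, c₀; a₁, b₁, c₁; a₃, b₃, c₃] =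
      ((H3pts ![a₀, b₀, c₀] ![a₁, b₁, c₁] ![a₃, b₃, c₃]).ncard : ℤ))
    (hcard : ((H3pts ![a₀, b₀, c₀] ![a₁, b₁, c₁] ![a₃, b₃, c₃]).ncard : ℤ) =
      (a₀ * b₃ - a₃ * b₀) * (a₁ * b₀ - a₀ * b₁) * (fAB : ℤ)) :
    (H2pts ![a₁, b₁, c₁] ![a₃, b₃, c₃]).ncard =
        Int.gcd ((a₀ * b₃ - a₃ * b₀) * fAB)
          (Int.gcd ((a₁ * b₀ - a₀ * b₁) * fAB) (a₁ * b₃ - a₃ * b₁)) ∧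
      (H2pts ![a₁, b₁, c₁] ![a₃, b₃, c₃]).ncard =
        Int.gcd ((a₀ * b₃ - a₃ * b₀) * fAB) (a₁ * b₃ - a₃ * b₁) ∧
      (H2pts ![a₁, b₁, c₁] ![a₃, b₃, c₃]).ncard =
        Int.gcd ((a₁ * b₀ - a₀ * b₁) * fAB) (a₁ * b₃ - a₃ * b₁) :=
  mu2_eq_gcds_general a₀ b₀ c₀ a₁ b₁ c₁ a₃ b₃ c₃ hp₀ hp₁ hp₃ hΨpos hμApos hμBpos hμA hμB fAB hdet
    hcard

end
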